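/- Let α ∈ (0,2), U_pl(θ) = 2^(−α)·(1 + (sin θ)^(−α) + (cos θ)^(−α)) and U_ap(φ) = (2 cos φ)^(−α) + 2^(1−α/2)·(1 + sin² φ)^(−α/2). Then U_pl(π/4) > U_ap(arctan(1/√2)). Equivalently, the value of the potential at the planar (square) central configuration strictly exceeds its value at the tetrahedral central configuration, so that v(planar) > v(tetrahedral) > 0 on the collision manifold. -/
import Mathlib
open Real

lemma cube_amgm (x : ℝ) (hx : 0 < x) : 3 * x ^ ((2:ℝ)/3) ≤ 2 * x + 1 := by
  set y := x ^ ((1:ℝ)/3) with hy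
  have hy0 : 0 < y := Real.rpow_pos_of_pos hx _
  have h2 : x ^ ((2:ℝ)/3) = y ^ 2 := by
    rw [hy, ← Real.rpow_natCast (x ^ ((1:ℝ)/3)) 2, ← Real.rpow_mul hx.le]
    norm_num
  have h3 : x = y ^ 3 := by
    rw [hy, ← Real.rpow_natCast (x ^ ((1:ℝ)/3)) 3, ← Real.rpow_mul hx.le]
    norm_num
  rw [h2, h3]
  nlinarith [sq_nonneg (y - 1), hy0.le, mul_nonneg (sq_nonneg (y-1)) hy0.le]

lemma key (t : ℝ) (ht : 0 < t) : 3 * (3/2 : ℝ) ^ t < 2 * (2:ℝ) ^ t + 1 := by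
  have hb : (3/2 : ℝ) < (2:ℝ) ^ ((2:ℝ)/3) := by
    have h4 : ((2:ℝ) ^ ((2:ℝ)/3)) ^ (3:ℕ) = 4 := by
      rw [← Real.rpow_natCast ((2:ℝ) ^ ((2:ℝ)/3)) 3, ← Real.rpow_mul (by norm_num)]
      norm_num
    by_contra h
    push_neg at h
    have := pow_le_pow_left₀ (by positivity) h 3
    rw [h4] at this
    norm_num at this
  have h1 : (3/2 : ℝ) ^ t < ((2:ℝ) ^ ((2:ℝ)/3)) ^ t :=
    Real.rpow_lt_rpow (by norm_num) hb ht
  have h2 : ((2:ℝ) ^ ((2:ℝ)/3)) ^ t = ((2:ℝ) ^ t) ^ ((2:ℝ)/3) := by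
    rw [← Real.rpow_mul (by norm_num), mul_comm, Real.rpow_mul (by norm_num)]
  have h3 := cube_amgm ((2:ℝ) ^ t) (Real.rpow_pos_of_pos (by norm_num) t)
  nlinarith [h2 ▸ h1]

/-- For `α ∈ (0,2)`, the value of the planar dihedral potential at the square
central configuration `θ = π/4` strictly exceeds the value of the tetrahedral
dihedral potential at the tetrahedral central configuration
`φ = arctan(1/√2)`. -/
theorem planar_potential_gt_tetrahedral_potential
    (α : ℝ) (hα : α ∈ Set.Ioo (0:ℝ) 2) :
    (2:ℝ) ^ (-α) * (1 + Real.sin (π/4) ^ (-α) + Real.cos (π/4) ^ (-α)) >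
      (2 * Real.cos (Real.arctan (1 / Real.sqrt 2))) ^ (-α) +
        (2:ℝ) ^ (1 - α/2) *
          (1 + Real.sin (Real.arctan (1 / Real.sqrt 2)) ^ 2) ^ (-(α/2)) := by
  obtain ⟨hα0, hα2⟩ := hα
  set t : ℝ := α / 2 with htdef
  have ht0 : 0 < t := by positivity
  have s2 : Real.sqrt 2 ^ 2 = 2 := Real.sq_sqrt (by norm_num)
  have s2pos : (0:ℝ) < Real.sqrt 2 := Real.sqrt_pos.mpr (by norm_num)
  have hxsq : (1 / Real.sqrt 2) ^ 2 = (1/2 : ℝ) := by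
    rw [div_pow, s2]; norm_num
  have s32 : Real.sqrt (3/2) ^ 2 = (3/2:ℝ) := Real.sq_sqrt (by norm_num)
  have s32pos : (0:ℝ) < Real.sqrt (3/2) := Real.sqrt_pos.mpr (by norm_num)
  -- trig values
  have hcos : 2 * Real.cos (Real.arctan (1 / Real.sqrt 2)) = (8/3 : ℝ) ^ ((1:ℝ)/2) := by
    rw [Real.cos_arctan, hxsq, show (1:ℝ) + 1/2 = 3/2 by norm_num,
      ← Real.sqrt_eq_rpow]
    rw [show (8/3:ℝ) = (3/2)⁻¹ * 4 by norm_num, Real.sqrt_mul (by positivity),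
      Real.sqrt_inv, show (4:ℝ) = 2^2 by norm_num, Real.sqrt_sq (by norm_num)]
    field_simp
  have hsin : 1 + Real.sin (Real.arctan (1 / Real.sqrt 2)) ^ 2 = (4/3 : ℝ) := by
    rw [Real.sin_arctan, hxsq, show (1:ℝ) + 1/2 = 3/2 by norm_num, div_pow, hxsq, s32]
    norm_num
  have hsin4 : Real.sin (π/4) = (2:ℝ) ^ (-(1/2:ℝ)) := by
    rw [Real.sin_pi_div_four, Real.rpow_neg (by norm_num), ← Real.sqrt_eq_rpow,
      inv_eq_one_div, div_eq_div_iff (by norm_num) s2pos.ne']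
    nlinarith [s2]
  have hcos4 : Real.cos (π/4) = (2:ℝ) ^ (-(1/2:ℝ)) := by
    rw [Real.cos_pi_div_four, ← hsin4, Real.sin_pi_div_four]
  rw [hsin4, hcos4, hcos, hsin]
  set a : ℝ := (2:ℝ) ^ t with hadef
  have ha0 : 0 < a := Real.rpow_pos_of_pos (by norm_num) t
  set b : ℝ := (3/2 : ℝ) ^ t with hbdef
  have hb0 : 0 < b := Real.rpow_pos_of_pos (by norm_num) t
  have e0 : (2:ℝ) ^ (-α) = a⁻¹ * a⁻¹ := by
    rw [show -α = -t + -t by rw [htdef]; ring, Real.rpow_add (by norm_num),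
      Real.rpow_neg (by norm_num), hadef]
  have e1 : ((2:ℝ) ^ (-(1/2:ℝ))) ^ (-α) = a := by
    rw [← Real.rpow_mul (by norm_num : (0:ℝ) ≤ 2), hadef, htdef]
    congr 1
    ring
  have e2 : ((8/3:ℝ) ^ ((1:ℝ)/2)) ^ (-α) = b / (a*a) := by
    rw [← Real.rpow_mul (by norm_num : (0:ℝ) ≤ 8/3),
      show (1:ℝ)/2 * (-α) = -t by rw [htdef]; ring,
      Real.rpow_neg (by norm_num), show (8/3:ℝ) = (2*2)/(3/2) by norm_num,
      Real.div_rpow (by norm_num) (by norm_num),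
      Real.mul_rpow (by norm_num) (by norm_num), inv_div, hadef, hbdef]
  have e3 : (2:ℝ) ^ (1 - t) = 2 / a := by
    rw [Real.rpow_sub (by norm_num), Real.rpow_one, hadef]
  have e4 : (4/3:ℝ) ^ (-t) = b / a := by
    rw [Real.rpow_neg (by norm_num), show (4/3:ℝ) = 2/(3/2) by norm_num,
      Real.div_rpow (by norm_num) (by norm_num), inv_div, hadef, hbdef]
  rw [e0, e1, e2, e3, e4]
  have hkey := key t ht0
  rw [gt_iff_lt,
    show b / (a*a) + 2 / a * (b / a) = 3*b / (a*a) by field_simp; ring,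
    show a⁻¹ * a⁻¹ * (1 + a + a) = (2*a+1) / (a*a) by field_simp; ring,
    div_lt_div_iff₀ (by positivity) (by positivity)]
  nlinarith [mul_pos ha0 ha0]
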